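/- arXiv:2603.06747 — 4 statements merged into one kernel-verified Lean document; each statement's English description precedes it below -/
import Mathlib

section
/- For integers n ≥ 2 and m ≥ 2, let P_n and P_m be paths with n and m vertices respectively. Then AT(P_n +_R P_m) = 3. -/
open scoped Classical

/-- The outdegree of a vertex `v` in a finite set of arcs `A`. -/
noncomputable def arcOutDeg {V : Type*} (A : Finset (V × V)) (v : V) : ℕ :=
  (A.filter fun a => a.1 = v).card

/-- The indegree of a vertex `v` in a finite set of arcs `A`. -/
noncomputable def arcInDeg {V : Type*} (A : Finset (V × V)) (v : V) : ℕ :=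
  (A.filter fun a => a.2 = v).card

/-- `A` is an orientation of the simple graph `G`: every arc of `A` joins adjacent
vertices, and every edge of `G` receives exactly one of its two possible directions. -/
def IsOrientation {V : Type*} (G : SimpleGraph V) (A : Finset (V × V)) : Prop :=
  (∀ a ∈ A, G.Adj a.1 a.2) ∧ ∀ u v : V, G.Adj u v → ((u, v) ∈ A ↔ (v, u) ∉ A)

/-- A set of arcs is Eulerian if at every vertex the indegree equals the outdegree. -/
def IsEulerianSub {V : Type*} (B : Finset (V × V)) : Prop :=
  ∀ v : V, arcInDeg B v = arcOutDeg B v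

/-- An orientation (given by its arc set `A`) is an Alon–Tarsi orientation if the number
of its even Eulerian sub-digraphs differs from the number of its odd Eulerian
sub-digraphs. -/
def IsATOrientation {V : Type*} (A : Finset (V × V)) : Prop :=
  (A.powerset.filter fun B => IsEulerianSub B ∧ Even B.card).card ≠
    (A.powerset.filter fun B => IsEulerianSub B ∧ ¬ Even B.card).card

/-- The Alon–Tarsi number of `G`: the least `k` such that `G` has an Alon–Tarsi
orientation with maximum outdegree at most `k - 1` (i.e. `< k`). -/
noncomputable def alonTarsiNumber {V : Type*} (G : SimpleGraph V) : ℕ :=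
  sInf {k : ℕ | ∃ A : Finset (V × V),
    IsOrientation G A ∧ IsATOrientation A ∧ ∀ v : V, arcOutDeg A v < k}

/-- A graph is `k`-degenerate if every nonempty (induced) subgraph has a vertex of
degree at most `k`. -/
def Degenerate {V : Type*} (k : ℕ) (G : SimpleGraph V) : Prop :=
  ∀ s : Finset V, s.Nonempty → ∃ v ∈ s, (s.filter fun u => G.Adj v u).card ≤ k

/-- The subdivision graph `S(G)`: each edge `uv` of `G` is replaced by a path `u-e-v`
through the new vertex `e` corresponding to `uv`. -/
def subdivisionGraph {V : Type*} (G : SimpleGraph V) : SimpleGraph (V ⊕ ↥G.edgeSet) :=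
  SimpleGraph.fromRel fun a b =>
    match a, b with
    | Sum.inl u, Sum.inr e => u ∈ (e : Sym2 V)
    | _, _ => False

/-- The graph `R(G)`: `G` together with, for each edge `uv`, a new vertex joined to
`u` and `v`. -/
def rGraph {V : Type*} (G : SimpleGraph V) : SimpleGraph (V ⊕ ↥G.edgeSet) :=
  SimpleGraph.fromRel fun a b =>
    match a, b with
    | Sum.inl u, Sum.inl v => G.Adj u v
    | Sum.inl u, Sum.inr e => u ∈ (e : Sym2 V)
    | _, _ => False

/-- The graph `Q(G)`: new vertices joined to the endpoints of their edges, and two new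
vertices joined iff the corresponding edges of `G` share an endpoint; original
vertices are pairwise nonadjacent. -/
def qGraph {V : Type*} (G : SimpleGraph V) : SimpleGraph (V ⊕ ↥G.edgeSet) :=
  SimpleGraph.fromRel fun a b =>
    match a, b with
    | Sum.inl u, Sum.inr e => u ∈ (e : Sym2 V)
    | Sum.inr e, Sum.inr f => e ≠ f ∧ ∃ u : V, u ∈ (e : Sym2 V) ∧ u ∈ (f : Sym2 V)
    | _, _ => False

/-- The total graph `T(G)`. -/
def tGraph {V : Type*} (G : SimpleGraph V) : SimpleGraph (V ⊕ ↥G.edgeSet) :=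
  SimpleGraph.fromRel fun a b =>
    match a, b with
    | Sum.inl u, Sum.inl v => G.Adj u v
    | Sum.inl u, Sum.inr e => u ∈ (e : Sym2 V)
    | Sum.inr e, Sum.inr f => e ≠ f ∧ ∃ u : V, u ∈ (e : Sym2 V) ∧ u ∈ (f : Sym2 V)
    | _, _ => False

/-- The `F`-sum construction: given a graph `K` on `V ⊕ E` (playing the role of `F(G)`,
whose "original" vertices are those of the form `Sum.inl u`) and a graph `H` on `W`,
two vertices `(u₁, u₂)` and `(v₁, v₂)` are adjacent iff either `u₁ = v₁` is an original
vertex and `u₂v₂ ∈ E(H)`, or `u₂ = v₂` and `u₁v₁ ∈ E(K)`. -/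
def fSum {V E W : Type*} (K : SimpleGraph (V ⊕ E)) (H : SimpleGraph W) :
    SimpleGraph ((V ⊕ E) × W) :=
  SimpleGraph.fromRel fun a b =>
    (a.1 = b.1 ∧ (∃ u : V, a.1 = Sum.inl u) ∧ H.Adj a.2 b.2) ∨
      (a.2 = b.2 ∧ K.Adj a.1 b.1)

/-- The `S`-sum `G +_S H`. -/
def sSum {V W : Type*} (G : SimpleGraph V) (H : SimpleGraph W) :
    SimpleGraph ((V ⊕ ↥G.edgeSet) × W) :=
  fSum (subdivisionGraph G) H

/-- The `R`-sum `G +_R H`. -/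
def rSum {V W : Type*} (G : SimpleGraph V) (H : SimpleGraph W) :
    SimpleGraph ((V ⊕ ↥G.edgeSet) × W) :=
  fSum (rGraph G) H

/-- The `Q`-sum `G +_Q H`. -/
def qSum {V W : Type*} (G : SimpleGraph V) (H : SimpleGraph W) :
    SimpleGraph ((V ⊕ ↥G.edgeSet) × W) :=
  fSum (qGraph G) H

/-- The `T`-sum `G +_T H`. -/
def tSum {V W : Type*} (G : SimpleGraph V) (H : SimpleGraph W) :
    SimpleGraph ((V ⊕ ↥G.edgeSet) × W) :=
  fSum (tGraph G) H

/-- The star graph `S_n = K_{1,n}`. -/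
def starGraph (n : ℕ) : SimpleGraph (Fin 1 ⊕ Fin n) :=
  completeBipartiteGraph (Fin 1) (Fin n)

/-! An orientation in which every arc decreases a ranking `r : V → ℕ` is acyclic, so its only
Eulerian subdigraph is the empty one and it is Alon–Tarsi. Ranking the vertex `(u, w)` of
`P_n +_R P_m` by `u + w`, and the vertices subdividing edges of `P_n` above all of these, gives
such an orientation of maximum outdegree `2`; hence `AT ≤ 3`.

Conversely, an orientation with all outdegrees at most `k` has `k • |V|` arcs at most, and it
pulls back along an injective homomorphism. The squares `{u, v} × {w, w'}` over edges `uv` and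
`ww'`, together with the vertex subdividing `uv` at level `w`, contain a house (a `4`-cycle with a
triangle on one side: `5` vertices, `6` edges), so every orientation has an outdegree `≥ 2`. -/

open Finset SimpleGraph Sum Function

section Orientation

variable {V : Type*}

lemma IsEulerianSub.eq_empty_of_forall_lt {B : Finset (V × V)} (hB : IsEulerianSub B)
    (r : V → ℕ) (hr : ∀ a ∈ B, r a.2 < r a.1) : B = ∅ := by
  by_contra hne
  obtain ⟨a, ha, hmax⟩ := B.exists_max_image (fun a => r a.1) (nonempty_iff_ne_empty.2 hne)
  have hout : arcOutDeg B a.1 ≠ 0 :=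
    card_ne_zero_of_mem (mem_filter.2 ⟨ha, rfl⟩)
  have hin : arcInDeg B a.1 = 0 := by
    refine card_eq_zero.2 (filter_eq_empty_iff.2 fun b hb hba => ?_)
    have hdesc := hr b hb
    have hle := hmax b hb
    rw [hba] at hdesc
    omega
  exact hout (hB a.1 ▸ hin)

lemma isATOrientation_of_forall_lt {A : Finset (V × V)} (r : V → ℕ)
    (hr : ∀ a ∈ A, r a.2 < r a.1) : IsATOrientation A := by
  have hodd : (A.powerset.filter fun B => IsEulerianSub B ∧ ¬ Even B.card) = ∅ := by
    refine filter_eq_empty_iff.2 fun B hB ⟨hE, hodd⟩ => hodd ?_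
    rw [hE.eq_empty_of_forall_lt r fun a ha => hr a (mem_powerset.1 hB ha)]
    exact ⟨0, rfl⟩
  rw [IsATOrientation, hodd, card_empty]
  exact card_ne_zero_of_mem (mem_filter.2 ⟨empty_mem_powerset A, fun _ => rfl, ⟨0, rfl⟩⟩)

lemma card_eq_sum_arcOutDeg [Fintype V] (A : Finset (V × V)) : #A = ∑ v, arcOutDeg A v :=
  card_eq_sum_card_fiberwise fun a _ => mem_univ a.1

lemma IsOrientation.card_eq {G : SimpleGraph V} [Fintype G.edgeSet] {A : Finset (V × V)}
    (hA : IsOrientation G A) : #A = #G.edgeFinset := by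
  refine card_nbij (fun a => s(a.1, a.2)) (fun a ha => mem_edgeFinset.2 (hA.1 a ha))
    (fun a ha b hb hab => ?_) (fun e he => ?_)
  · rcases Sym2.eq_iff.1 hab with ⟨h1, h2⟩ | ⟨h1, h2⟩
    · exact Prod.ext h1 h2
    · have hba : (a.2, a.1) ∉ A := (hA.2 _ _ (hA.1 a ha)).1 ha
      rw [h1, h2] at hba
      exact absurd hb hba
  · induction e using Sym2.ind with
    | _ x y =>
      have hxy : G.Adj x y := mem_edgeFinset.1 he
      by_cases h : (x, y) ∈ A
      · exact ⟨(x, y), h, rfl⟩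
      · exact ⟨(y, x), not_not.1 fun h' => h ((hA.2 x y hxy).2 h'), Sym2.eq_swap⟩

lemma IsOrientation.card_edgeFinset_le [Fintype V] {G : SimpleGraph V} [Fintype G.edgeSet]
    {A : Finset (V × V)} (hA : IsOrientation G A) {k : ℕ} (hk : ∀ v, arcOutDeg A v ≤ k) :
    #G.edgeFinset ≤ k * Fintype.card V := by
  rw [← hA.card_eq, card_eq_sum_arcOutDeg, mul_comm, ← smul_eq_mul, ← card_univ]
  exact sum_le_card_nsmul _ _ _ fun v _ => hk v

end Orientation

section Rank

variable {V : Type*} [Fintype V] (G : SimpleGraph V) (r : V → ℕ)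

noncomputable def rankArcs : Finset (V × V) :=
  univ.filter fun a => G.Adj a.1 a.2 ∧ r a.2 < r a.1

variable {G r}

lemma mem_rankArcs {a : V × V} : a ∈ rankArcs G r ↔ G.Adj a.1 a.2 ∧ r a.2 < r a.1 := by
  simp [rankArcs]

lemma isOrientation_rankArcs (hr : ∀ x y, G.Adj x y → r x ≠ r y) :
    IsOrientation G (rankArcs G r) := by
  refine ⟨fun a ha => (mem_rankArcs.1 ha).1, fun x y hxy => ?_⟩
  have hne := hr x y hxy
  simp only [mem_rankArcs, hxy, hxy.symm, true_and, not_lt]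
  omega

lemma isATOrientation_rankArcs : IsATOrientation (rankArcs G r) :=
  isATOrientation_of_forall_lt r fun _ ha => (mem_rankArcs.1 ha).2

lemma arcOutDeg_rankArcs_le {v : V} {t : Finset V}
    (ht : ∀ y, G.Adj v y → r y < r v → y ∈ t) :
    arcOutDeg (rankArcs G r) v ≤ #t := by
  refine card_le_card_of_injOn Prod.snd (fun a ha => ?_) fun a ha b hb hab => ?_
  · obtain ⟨haA, rfl⟩ := mem_filter.1 ha
    exact ht a.2 (mem_rankArcs.1 haA).1 (mem_rankArcs.1 haA).2
  · exact Prod.ext ((mem_filter.1 ha).2.trans (mem_filter.1 hb).2.symm) hab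

end Rank

section Comap

variable {V W : Type*} [Fintype W] {G : SimpleGraph V} {H : SimpleGraph W}

noncomputable def arcComap (H : SimpleGraph W) (f : W → V) (A : Finset (V × V)) :
    Finset (W × W) :=
  univ.filter fun a => H.Adj a.1 a.2 ∧ (f a.1, f a.2) ∈ A

lemma IsOrientation.comap {A : Finset (V × V)} (hA : IsOrientation G A) (f : H →g G) :
    IsOrientation H (arcComap H f A) := by
  refine ⟨fun a ha => (mem_filter.1 ha).2.1, fun x y hxy => ?_⟩
  simp only [arcComap, mem_filter, mem_univ, true_and, hxy, hxy.symm]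
  exact hA.2 _ _ (f.map_adj hxy)

lemma arcOutDeg_arcComap_le {f : W → V} (hf : Injective f) (A : Finset (V × V)) (w : W) :
    arcOutDeg (arcComap H f A) w ≤ arcOutDeg A (f w) := by
  refine card_le_card_of_injOn (Prod.map f f) (fun a ha => ?_) fun a _ b _ hab => ?_
  · obtain ⟨haA, rfl⟩ := mem_filter.1 ha
    exact mem_filter.2 ⟨(mem_filter.1 haA).2.2, rfl⟩
  · exact hf.prodMap hf hab

lemma SimpleGraph.Copy.exists_lt_arcOutDeg [Fintype H.edgeSet] (f : Copy H G) {k : ℕ}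
    (hH : k * Fintype.card W < #H.edgeFinset) {A : Finset (V × V)} (hA : IsOrientation G A) :
    ∃ v, k < arcOutDeg A v := by
  by_contra! hk
  refine hH.not_ge ((hA.comap f.toHom).card_edgeFinset_le fun w => ?_)
  exact (arcOutDeg_arcComap_le f.injective A w).trans (hk (f w))

end Comap

lemma alonTarsiNumber_eq {V : Type*} {G : SimpleGraph V} {A : Finset (V × V)} {k : ℕ}
    (hA : IsOrientation G A) (hAT : IsATOrientation A) (hlt : ∀ v, arcOutDeg A v < k)
    (hge : ∀ B, IsOrientation G B → ∃ v, k ≤ arcOutDeg B v + 1) :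
    alonTarsiNumber G = k := by
  refine le_antisymm (Nat.sInf_le ⟨A, hA, hAT, hlt⟩) (le_csInf ⟨k, A, hA, hAT, hlt⟩ ?_)
  rintro j ⟨B, hB, -, hj⟩
  obtain ⟨v, hv⟩ := hge B hB
  have hjv := hj v
  omega

def houseEdges : List (Fin 5 × Fin 5) :=
  [(0, 1), (1, 2), (2, 3), (3, 0), (0, 4), (1, 4)]

def houseGraph : SimpleGraph (Fin 5) :=
  fromRel fun i j => (i, j) ∈ houseEdges

instance : DecidableRel houseGraph.Adj := fun _ _ => by
  unfold houseGraph
  rw [fromRel_adj]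
  infer_instance

lemma card_edgeFinset_houseGraph : #houseGraph.edgeFinset = 6 := by
  decide

section RSum

variable {V W : Type*} {G : SimpleGraph V} {H : SimpleGraph W}

@[simp] lemma rGraph_adj_inl_inl {u v : V} : (rGraph G).Adj (inl u) (inl v) ↔ G.Adj u v := by
  simp only [rGraph, fromRel_adj, ne_eq, inl.injEq]
  exact ⟨fun h => h.2.elim id (·.symm), fun h => ⟨h.ne, .inl h⟩⟩

@[simp] lemma rGraph_adj_inl_inr {u : V} {e : G.edgeSet} :
    (rGraph G).Adj (inl u) (inr e) ↔ u ∈ (e : Sym2 V) := by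
  simp [rGraph]

@[simp] lemma rGraph_adj_inr_inl {u : V} {e : G.edgeSet} :
    (rGraph G).Adj (inr e) (inl u) ↔ u ∈ (e : Sym2 V) := by
  simp [rGraph]

@[simp] lemma rGraph_not_adj_inr_inr {e f : G.edgeSet} : ¬ (rGraph G).Adj (inr e) (inr f) := by
  simp [rGraph]

lemma rSum_adj {x y : V ⊕ G.edgeSet} {w w' : W} :
    (rSum G H).Adj (x, w) (y, w') ↔
      (x = y ∧ (∃ u, x = inl u) ∧ H.Adj w w') ∨ (w = w' ∧ (rGraph G).Adj x y) := by
  simp only [rSum, fSum, fromRel_adj, ne_eq, Prod.mk.injEq]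
  constructor
  · rintro ⟨-, h | ⟨rfl, hu, h⟩ | ⟨rfl, h⟩⟩
    exacts [h, .inl ⟨rfl, hu, h.symm⟩, .inr ⟨rfl, h.symm⟩]
  · rintro (⟨rfl, hu, h⟩ | ⟨rfl, h⟩)
    exacts [⟨fun hw => h.ne hw.2, .inl (.inl ⟨rfl, hu, h⟩)⟩,
      ⟨fun hx => h.ne hx.1, .inl (.inr ⟨rfl, h⟩)⟩]

def houseCopy {a b : V} (hab : G.Adj a b) {x y : W} (hxy : H.Adj x y) :
    Copy houseGraph (rSum G H) :=
  let f : Fin 5 → (V ⊕ G.edgeSet) × W :=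
    ![(inl a, x), (inl b, x), (inl b, y), (inl a, y), (inr ⟨s(a, b), hab⟩, x)]
  have hf : ∀ i j, (i, j) ∈ houseEdges → (rSum G H).Adj (f i) (f j) := by
    intro i j h
    simp only [houseEdges, List.mem_cons, Prod.mk.injEq, List.not_mem_nil, or_false] at h
    rcases h with h | h | h | h | h | h <;> obtain ⟨rfl, rfl⟩ := h <;>
      simp [f, rSum_adj, hab, hab.symm, hxy, hxy.symm]
  { toHom := ⟨f, fun {i j} h => h.2.elim (hf i j) fun h => (hf j i h).symm⟩
    injective' := by
      intro i j hij
      fin_cases i <;> fin_cases j <;> simp_all [f, hab.ne, hxy.ne, hab.ne.symm, hxy.ne.symm] }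

end RSum

section Path

variable {n m : ℕ}

def pathRSumRank (n m : ℕ) : (Fin n ⊕ (pathGraph n).edgeSet) × Fin m → ℕ
  | (inl u, w) => u + w
  | (inr _, _) => n + m

lemma pathRSumRank_ne_of_adj {p q : (Fin n ⊕ (pathGraph n).edgeSet) × Fin m}
    (h : (rSum (pathGraph n) (pathGraph m)).Adj p q) :
    pathRSumRank n m p ≠ pathRSumRank n m q := by
  obtain ⟨x, w⟩ := p
  obtain ⟨y, w'⟩ := q
  rcases rSum_adj.1 h with ⟨rfl, ⟨u, rfl⟩, hw⟩ | ⟨rfl, hx⟩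
  · rw [pathGraph_adj] at hw
    simp only [pathRSumRank]
    omega
  · rcases x with u | e <;> rcases y with v | f
    · rw [rGraph_adj_inl_inl, pathGraph_adj] at hx
      simp only [pathRSumRank]
      omega
    · simp only [pathRSumRank]
      omega
    · simp only [pathRSumRank]
      omega
    · exact absurd hx rGraph_not_adj_inr_inr

lemma arcOutDeg_rankArcs_pathRSumRank_le (p : (Fin n ⊕ (pathGraph n).edgeSet) × Fin m) :
    arcOutDeg (rankArcs (rSum (pathGraph n) (pathGraph m)) (pathRSumRank n m)) p ≤ 2 := by
  obtain ⟨u | e, w⟩ := p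
  · calc _ ≤ #{(inl ⟨u - 1, by omega⟩, w), (inl u, ⟨w - 1, by omega⟩)} :=
          arcOutDeg_rankArcs_le ?_
      _ ≤ 2 := card_le_two
    rintro ⟨y, w'⟩ hadj hlt
    simp only [mem_insert, mem_singleton, Prod.mk.injEq]
    rcases rSum_adj.1 hadj with ⟨rfl, -, h⟩ | ⟨rfl, h⟩
    · rw [pathGraph_adj] at h
      simp only [pathRSumRank] at hlt
      exact .inr ⟨rfl, Fin.ext (by simp; omega)⟩
    · rcases y with v | f
      · rw [rGraph_adj_inl_inl, pathGraph_adj] at h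
        simp only [pathRSumRank] at hlt
        exact .inl ⟨congrArg inl (Fin.ext (by simp; omega)), rfl⟩
      · simp only [pathRSumRank] at hlt
        omega
  · calc _ ≤ #((e : Sym2 (Fin n)).toFinset.image fun u => ((inl u : Fin n ⊕ _), w)) :=
          arcOutDeg_rankArcs_le ?_
      _ ≤ #(e : Sym2 (Fin n)).toFinset := card_image_le
      _ ≤ 2 := by rw [Sym2.card_toFinset]; split_ifs <;> omega
    rintro ⟨y, w'⟩ hadj -
    rcases rSum_adj.1 hadj with ⟨-, ⟨u, hu⟩, -⟩ | ⟨rfl, h⟩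
    · exact absurd hu inr_ne_inl
    · rcases y with u | f
      · exact mem_image.2 ⟨u, Sym2.mem_toFinset.2 (rGraph_adj_inr_inl.1 h), rfl⟩
      · exact absurd h rGraph_not_adj_inr_inr

end Path

/-- `AT(P_n +_R P_m) = 3` for `n, m ≥ 2`. -/
theorem stmt10 (n m : ℕ) (hn : 2 ≤ n) (hm : 2 ≤ m) :
    alonTarsiNumber (rSum (SimpleGraph.pathGraph n) (SimpleGraph.pathGraph m)) = 3 := by
  have h01 : ∀ k (hk : 2 ≤ k), (pathGraph k).Adj ⟨0, by omega⟩ ⟨1, hk⟩ := fun _ _ =>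
    pathGraph_adj.2 (.inl rfl)
  refine alonTarsiNumber_eq (isOrientation_rankArcs fun _ _ => pathRSumRank_ne_of_adj)
    isATOrientation_rankArcs
    (fun p => (arcOutDeg_rankArcs_pathRSumRank_le p).trans_lt (by norm_num)) fun B hB => ?_
  obtain ⟨v, hv⟩ := (houseCopy (h01 n hn) (h01 m hm)).exists_lt_arcOutDeg (k := 1)
    (by rw [card_edgeFinset_houseGraph]; decide) hB
  exact ⟨v, Nat.succ_le_succ hv⟩
end

section
/- Let G be a k-degenerate graph with maximum degree Δ(G) > 1 and let H be an l-degenerate graph. Then the Q-sum G +_Q H is max{2Δ(G) − 2, k + l}-degenerate. -/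
open scoped Classical

section helpers
variable {V W : Type*} (G : SimpleGraph V) (H : SimpleGraph W)

lemma sym2_exists_mem (z : Sym2 V) : ∃ a, a ∈ z := by
  induction z using Sym2.ind with
  | _ x y => exact ⟨x, by simp⟩

lemma qGraph_adj_inl (u : V) (y : V ⊕ ↥G.edgeSet) :
    (qGraph G).Adj (Sum.inl u) y ↔ ∃ e : ↥G.edgeSet, y = Sum.inr e ∧ u ∈ (e : Sym2 V) := by
  cases y with
  | inl v => simp [qGraph, SimpleGraph.fromRel_adj]
  | inr e => simp [qGraph, SimpleGraph.fromRel_adj]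

lemma qGraph_adj_inr (e : ↥G.edgeSet) (y : V ⊕ ↥G.edgeSet) :
    (qGraph G).Adj (Sum.inr e) y ↔
      (∃ u : V, y = Sum.inl u ∧ u ∈ (e : Sym2 V)) ∨
      (∃ f : ↥G.edgeSet, y = Sum.inr f ∧ f ≠ e ∧
        ∃ u : V, u ∈ (e : Sym2 V) ∧ u ∈ (f : Sym2 V)) := by
  cases y with
  | inl v =>
    simp only [qGraph, SimpleGraph.fromRel_adj]
    constructor
    · rintro ⟨-, h | h⟩
      · exact absurd h (by simp)
      · exact Or.inl ⟨v, rfl, h⟩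
    · rintro (⟨u, hu, hmem⟩ | ⟨f, hf, -⟩)
      · cases hu; exact ⟨by simp, Or.inr hmem⟩
      · cases hf
  | inr f =>
    simp only [qGraph, SimpleGraph.fromRel_adj]
    constructor
    · rintro ⟨hne, ⟨hef, u, h1, h2⟩ | ⟨hef, u, h1, h2⟩⟩
      · exact Or.inr ⟨f, rfl, fun h => hef h.symm, u, h1, h2⟩
      · exact Or.inr ⟨f, rfl, fun h => hef h, u, h2, h1⟩
    · rintro (⟨u, hu, -⟩ | ⟨g, hg, hne, u, h1, h2⟩)
      · cases hu
      · cases hg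
        exact ⟨by simpa using hne.symm, Or.inl ⟨fun h => hne h.symm, u, h1, h2⟩⟩

lemma qSum_adj (x y : V ⊕ ↥G.edgeSet) (w w' : W) :
    (qSum G H).Adj (x, w) (y, w') ↔
      (w = w' ∧ (qGraph G).Adj x y) ∨
      (x = y ∧ (∃ u : V, x = Sum.inl u) ∧ H.Adj w w') := by
  show (SimpleGraph.fromRel _).Adj _ _ ↔ _
  rw [SimpleGraph.fromRel_adj]
  constructor
  · rintro ⟨hne, h | h⟩
    · rcases h with ⟨h1, h2, h3⟩ | ⟨h2, h3⟩
      · exact Or.inr ⟨h1, h2, h3⟩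
      · exact Or.inl ⟨h2, h3⟩
    · rcases h with ⟨h1, h2, h3⟩ | ⟨h2, h3⟩
      · exact Or.inr ⟨h1.symm, by rw [show x = y from h1.symm]; exact h2, h3.symm⟩
      · exact Or.inl ⟨h2.symm, h3.symm⟩
  · rintro (⟨rfl, h⟩ | ⟨rfl, h2, h3⟩)
    · exact ⟨by simp [Prod.ext_iff, h.ne], Or.inl (Or.inr ⟨rfl, h⟩)⟩
    · exact ⟨by simp [Prod.ext_iff, h3.ne], Or.inl (Or.inl ⟨rfl, h2, h3⟩)⟩

end helpers

lemma edge_other {V : Type*} {G : SimpleGraph V} {u : V} {e : ↥G.edgeSet}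
    (h : u ∈ (e : Sym2 V)) :
    G.Adj u (Sym2.Mem.other h) ∧ (e : Sym2 V) = s(u, Sym2.Mem.other h) := by
  have hs := Sym2.other_spec h
  refine ⟨?_, hs.symm⟩
  have he : (e : Sym2 V) ∈ G.edgeSet := e.2
  rw [← hs, SimpleGraph.mem_edgeSet] at he
  exact he

/-- if `G` is `k`-degenerate with `Δ(G) > 1` and `H` is `l`-degenerate,
then `G +_Q H` is `max (2Δ(G) - 2) (k + l)`-degenerate. -/
theorem stmt13 {V W : Type*} [Fintype V] [Fintype W]
    (k l : ℕ) (G : SimpleGraph V) (H : SimpleGraph W)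
    (hΔ : 1 < G.maxDegree) (hG : Degenerate k G) (hH : Degenerate l H) :
    Degenerate (max (2 * G.maxDegree - 2) (k + l)) (qSum G H) := by
  intro s hs
  -- choose a layer w0 with few earlier H-neighbours
  set W₀ : Finset W := Finset.univ.filter (fun w => ∃ x, (x, w) ∈ s) with hW₀
  have hW₀ne : W₀.Nonempty := by
    obtain ⟨p, hp⟩ := hs
    refine ⟨p.2, ?_⟩
    rw [hW₀]
    exact Finset.mem_filter.mpr ⟨Finset.mem_univ _, ⟨p.1, by simpa using hp⟩⟩
  obtain ⟨w0, hw0W, hw0l⟩ := hH W₀ hW₀ne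
  set L : Finset (V ⊕ ↥G.edgeSet) := Finset.univ.filter (fun x => (x, w0) ∈ s) with hL
  have hmemL : ∀ x : V ⊕ ↥G.edgeSet, x ∈ L ↔ (x, w0) ∈ s := by
    intro x; simp [hL]
  have hLne : L.Nonempty := by
    obtain ⟨x, hx⟩ := (Finset.mem_filter.mp hw0W).2
    exact ⟨x, (hmemL x).mpr hx⟩
  set U : Finset V := Finset.univ.filter (fun u => Sum.inl u ∈ L) with hU
  have hmemU : ∀ u : V, u ∈ U ↔ (Sum.inl u, w0) ∈ s := by
    intro u; simp [hU, hmemL]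
  -- the number of edge-vertices in the layer through u
  set ds : V → ℕ := fun u =>
    (L.filter fun x => ∃ e : ↥G.edgeSet, x = Sum.inr e ∧ u ∈ (e : Sym2 V)).card with hds
  -- generic bound on ds via injection into neighbours
  have ds_le : ∀ (u : V) (T : Finset V),
      (∀ (e : ↥G.edgeSet) (v : V), Sum.inr e ∈ L → (e : Sym2 V) = s(u, v) → G.Adj u v → v ∈ T) →
      ds u ≤ (T.filter fun v => G.Adj u v).card := by
    intro u T hT
    rw [hds]
    apply Finset.card_le_card_of_injOn (fun x =>
      match x with
      | Sum.inl _ => u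
      | Sum.inr e => if h : u ∈ (e : Sym2 V) then Sym2.Mem.other h else u)
    · intro x hx
      obtain ⟨hxL, e, rfl, hue⟩ := Finset.mem_filter.mp hx
      obtain ⟨hadj, hspec⟩ := edge_other (G := G) hue
      simp only [dif_pos hue]
      exact Finset.mem_filter.mpr ⟨hT e _ hxL hspec hadj, hadj⟩
    · intro x hx y hy hxy
      obtain ⟨hxL, e, rfl, hue⟩ := Finset.mem_filter.mp (Finset.mem_coe.mp hx)
      obtain ⟨hyL, f, rfl, huf⟩ := Finset.mem_filter.mp (Finset.mem_coe.mp hy)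
      simp only [dif_pos hue, dif_pos huf] at hxy
      have he := (edge_other (G := G) hue).2
      have hf := (edge_other (G := G) huf).2
      have : (e : Sym2 V) = (f : Sym2 V) := by rw [he, hf, hxy]
      exact congrArg Sum.inr (Subtype.ext this)
  have ds_le_Δ : ∀ u : V, ds u ≤ G.maxDegree := by
    intro u
    have h1 : ds u ≤ (Finset.univ.filter fun v => G.Adj u v).card :=
      ds_le u Finset.univ (fun _ _ _ _ _ => Finset.mem_univ _)
    have h2 : (Finset.univ.filter fun v => G.Adj u v) = G.neighborFinset u := by
      ext v; simp
    rw [h2] at h1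
    exact le_trans h1 (G.degree_le_maxDegree u)
  by_cases hA : ∃ u ∈ U, ds u ≤ k
  -- CASE A: some layer vertex u with few layer edges through it
  · obtain ⟨u, huU, hdu⟩ := hA
    have hpmem : (Sum.inl u, w0) ∈ s := (hmemU u).mp huU
    refine ⟨(Sum.inl u, w0), hpmem, ?_⟩
    set t := s.filter (fun q => (qSum G H).Adj (Sum.inl u, w0) q) with ht
    have hsplit := Finset.card_filter_add_card_filter_not
      (s := t) (p := fun q => q.2 = w0)
    have h1 : (t.filter fun q => q.2 = w0).card ≤ ds u := by
      rw [hds]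
      apply Finset.card_le_card_of_injOn Prod.fst
      · intro q hq
        obtain ⟨x, w'⟩ := q
        obtain ⟨hqt, hq2⟩ := Finset.mem_filter.mp hq
        obtain ⟨hqs, hadj⟩ := Finset.mem_filter.mp hqt
        simp only at hq2
        subst hq2
        rw [qSum_adj] at hadj
        rcases hadj with ⟨-, hadj⟩ | ⟨-, -, hadj⟩
        · rw [qGraph_adj_inl] at hadj
          obtain ⟨e, rfl, hue⟩ := hadj
          exact Finset.mem_filter.mpr ⟨(hmemL _).mpr hqs, e, rfl, hue⟩
        · exact absurd hadj (H.irrefl)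
      · intro q hq q' hq' hqq
        obtain ⟨x, w'⟩ := q
        obtain ⟨x', w''⟩ := q'
        have h2 := (Finset.mem_filter.mp (Finset.mem_coe.mp hq)).2
        have h2' := (Finset.mem_filter.mp (Finset.mem_coe.mp hq')).2
        simp only at h2 h2' hqq
        subst h2; subst h2'; subst hqq; rfl
    have h2 : (t.filter fun q => ¬ q.2 = w0).card ≤ l := by
      refine le_trans ?_ hw0l
      apply Finset.card_le_card_of_injOn Prod.snd
      · intro q hq
        obtain ⟨x, w'⟩ := q
        obtain ⟨hqt, hq2⟩ := Finset.mem_filter.mp hq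
        obtain ⟨hqs, hadj⟩ := Finset.mem_filter.mp hqt
        rw [qSum_adj] at hadj
        rcases hadj with ⟨hw, -⟩ | ⟨-, -, hadj⟩
        · exact absurd hw.symm (by simpa using hq2)
        · exact Finset.mem_filter.mpr ⟨by
            simp only [hW₀, Finset.mem_filter, Finset.mem_univ, true_and]
            exact ⟨x, hqs⟩, hadj⟩
      · intro q hq q' hq' hqq
        obtain ⟨x, w'⟩ := q
        obtain ⟨x', w''⟩ := q'
        have hadj := (Finset.mem_filter.mp (Finset.mem_filter.mp (Finset.mem_coe.mp hq)).1).2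
        have hadj' := (Finset.mem_filter.mp (Finset.mem_filter.mp (Finset.mem_coe.mp hq')).1).2
        rw [qSum_adj] at hadj hadj'
        have hq2 := (Finset.mem_filter.mp (Finset.mem_coe.mp hq)).2
        have hq2' := (Finset.mem_filter.mp (Finset.mem_coe.mp hq')).2
        simp only at hq2 hq2' hqq
        rcases hadj with ⟨hw, -⟩ | ⟨hx, -, -⟩
        · exact absurd hw.symm hq2
        rcases hadj' with ⟨hw, -⟩ | ⟨hx', -, -⟩
        · exact absurd hw.symm hq2'
        subst hqq
        rw [← hx, ← hx']
    calc t.card = (t.filter fun q => q.2 = w0).card +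
        (t.filter fun q => ¬ q.2 = w0).card := hsplit.symm
      _ ≤ ds u + l := Nat.add_le_add h1 h2
      _ ≤ k + l := Nat.add_le_add_right hdu l
      _ ≤ _ := le_max_right _ _
  -- CASE B: every layer vertex has many layer edges; pick a good edge-vertex
  · push_neg at hA
    have hEne : ∃ e : ↥G.edgeSet, Sum.inr e ∈ L := by
      obtain ⟨x, hxL⟩ := hLne
      cases x with
      | inr e => exact ⟨e, hxL⟩
      | inl u =>
        have hu : u ∈ U := by rw [hU]; exact Finset.mem_filter.mpr ⟨Finset.mem_univ _, hxL⟩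
        have hpos : 0 < ds u := lt_of_le_of_lt (Nat.zero_le k) (hA u hu)
        rw [hds] at hpos
        obtain ⟨y, hy⟩ := Finset.card_pos.mp hpos
        obtain ⟨hyL, e, rfl, -⟩ := Finset.mem_filter.mp hy
        exact ⟨e, hyL⟩
    set S : Finset V := Finset.univ.filter
      (fun v => ∃ e : ↥G.edgeSet, Sum.inr e ∈ L ∧ v ∈ (e : Sym2 V)) with hS
    have hSne : S.Nonempty := by
      obtain ⟨e, he⟩ := hEne
      obtain ⟨a, ha⟩ := sym2_exists_mem (e : Sym2 V)
      exact ⟨a, by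
        rw [hS]; exact Finset.mem_filter.mpr ⟨Finset.mem_univ _, e, he, ha⟩⟩
    obtain ⟨s₀, hs₀S, hs₀k⟩ := hG S hSne
    have hds₀ : ds s₀ ≤ k := by
      refine le_trans (ds_le s₀ S ?_) hs₀k
      intro e v heL hspec _
      rw [hS]
      exact Finset.mem_filter.mpr ⟨Finset.mem_univ _, e, heL, by rw [hspec]; simp⟩
    have hs₀U : s₀ ∉ U := fun h => absurd hds₀ (not_le_of_gt (hA s₀ h))
    obtain ⟨-, e, heL, hs₀e⟩ := Finset.mem_filter.mp (by rw [hS] at hs₀S; exact hs₀S)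
    set v : V := Sym2.Mem.other hs₀e with hv
    have hespec : (e : Sym2 V) = s(s₀, v) := (edge_other (G := G) hs₀e).2
    have hv_mem : v ∈ (e : Sym2 V) := Sym2.other_mem hs₀e
    have hpmem : (Sum.inr e, w0) ∈ s := (hmemL _).mp heL
    refine ⟨(Sum.inr e, w0), hpmem, ?_⟩
    set t := s.filter (fun q => (qSum G H).Adj (Sum.inr e, w0) q) with ht
    set N : Finset (V ⊕ ↥G.edgeSet) :=
      L.filter (fun x => (qGraph G).Adj (Sum.inr e) x) with hN
    have htN : t.card ≤ N.card := by
      apply Finset.card_le_card_of_injOn Prod.fst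
      · intro q hq
        obtain ⟨x, w'⟩ := q
        obtain ⟨hqs, hadj⟩ := Finset.mem_filter.mp hq
        rw [qSum_adj] at hadj
        rcases hadj with ⟨hw, hadj⟩ | ⟨-, ⟨u, hu⟩, -⟩
        · subst hw
          exact Finset.mem_filter.mpr ⟨(hmemL _).mpr hqs, hadj⟩
        · exact absurd hu (by simp)
      · intro q hq q' hq' hqq
        obtain ⟨x, w'⟩ := q
        obtain ⟨x', w''⟩ := q'
        have hadj := (Finset.mem_filter.mp (Finset.mem_coe.mp hq)).2
        have hadj' := (Finset.mem_filter.mp (Finset.mem_coe.mp hq')).2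
        rw [qSum_adj] at hadj hadj'
        rcases hadj with ⟨hw, -⟩ | ⟨-, ⟨u, hu⟩, -⟩
        swap; · exact absurd hu (by simp)
        rcases hadj' with ⟨hw', -⟩ | ⟨-, ⟨u, hu⟩, -⟩
        swap; · exact absurd hu (by simp)
        simp only at hqq
        subst hqq; rw [← hw, ← hw']
    set N2 : Finset (V ⊕ ↥G.edgeSet) :=
      (L.filter fun x => ∃ f : ↥G.edgeSet, x = Sum.inr f ∧ s₀ ∈ (f : Sym2 V)).erase
        (Sum.inr e) with hN2
    set N3 : Finset (V ⊕ ↥G.edgeSet) :=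
      (L.filter fun x => ∃ f : ↥G.edgeSet, x = Sum.inr f ∧ v ∈ (f : Sym2 V)).erase
        (Sum.inr e) with hN3
    have hN2card : N2.card = ds s₀ - 1 := by
      rw [hN2, hds]
      exact Finset.card_erase_of_mem (Finset.mem_filter.mpr ⟨heL, e, rfl, hs₀e⟩)
    have hN3card : N3.card = ds v - 1 := by
      rw [hN3, hds]
      exact Finset.card_erase_of_mem (Finset.mem_filter.mpr ⟨heL, e, rfl, hv_mem⟩)
    have hds₀1 : 1 ≤ ds s₀ := by
      rw [hds]
      exact Finset.card_pos.mpr ⟨Sum.inr e, Finset.mem_filter.mpr ⟨heL, e, rfl, hs₀e⟩⟩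
    have hmem_e : ∀ u : V, u ∈ (e : Sym2 V) → u = s₀ ∨ u = v := by
      intro u hu; rw [hespec] at hu; exact Sym2.mem_iff.mp hu
    have key : ∀ x ∈ N, x = Sum.inl v ∨ x ∈ N2 ∨ x ∈ N3 := by
      intro x hx
      obtain ⟨hxL, hadj⟩ := Finset.mem_filter.mp (by rw [hN] at hx; exact hx)
      rw [qGraph_adj_inr] at hadj
      rcases hadj with ⟨u, rfl, hue⟩ | ⟨f, rfl, hfe, u, hue, huf⟩
      · rcases hmem_e u hue with rfl | rfl
        · exact absurd ((hmemU u).mpr ((hmemL _).mp hxL)) hs₀U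
        · exact Or.inl rfl
      · have hne : Sum.inr f ≠ (Sum.inr e : V ⊕ ↥G.edgeSet) := by
          simpa using hfe
        rcases hmem_e u hue with rfl | rfl
        · exact Or.inr (Or.inl (Finset.mem_erase.mpr
            ⟨hne, Finset.mem_filter.mpr ⟨hxL, f, rfl, huf⟩⟩))
        · exact Or.inr (Or.inr (Finset.mem_erase.mpr
            ⟨hne, Finset.mem_filter.mpr ⟨hxL, f, rfl, huf⟩⟩))
    have hbound : t.card ≤ 2 * G.maxDegree - 2 := by
      have hdsvΔ := ds_le_Δ v
      have hds₀Δ := ds_le_Δ s₀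
      by_cases hvU : v ∈ U
      · have hkv : k < ds v := hA v hvU
        have hsub : N ⊆ insert (Sum.inl v) (N2 ∪ N3) := by
          intro x hx
          rcases key x hx with h | h | h
          · exact Finset.mem_insert.mpr (Or.inl h)
          · exact Finset.mem_insert.mpr (Or.inr (Finset.mem_union_left _ h))
          · exact Finset.mem_insert.mpr (Or.inr (Finset.mem_union_right _ h))
        have hc : N.card ≤ 1 + (N2.card + N3.card) :=
          le_trans (Finset.card_le_card hsub)
            (le_trans (Finset.card_insert_le _ _)
              (by
                have := Finset.card_union_le N2 N3
                omega))
        rw [hN2card, hN3card] at hc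
        omega
      · have hsub : N ⊆ N2 ∪ N3 := by
          intro x hx
          rcases key x hx with h | h | h
          · subst h
            obtain ⟨hxL, -⟩ := Finset.mem_filter.mp (by rw [hN] at hx; exact hx)
            exact absurd ((hmemU v).mpr ((hmemL _).mp hxL)) hvU
          · exact Finset.mem_union_left _ h
          · exact Finset.mem_union_right _ h
        have hc : N.card ≤ N2.card + N3.card :=
          le_trans (Finset.card_le_card hsub) (Finset.card_union_le N2 N3)
        rw [hN2card, hN3card] at hc
        omega
    exact le_trans hbound (le_max_left _ _)
end

section
/- Let G be a k-degenerate graph with maximum degree Δ(G) > 1 and let H be an l-degenerate graph. Then AT(G +_Q H) ≤ max{2Δ(G) − 2, k + l} + 1. -/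
open scoped Classical

/-! The graph `G +_Q H` is `max (2Δ(G) - 2) (k + l)`-degenerate, and orienting an
`m`-degenerate graph along a degeneracy order gives an acyclic orientation of maximum
outdegree `m`; it is Alon–Tarsi because its only Eulerian subdigraph is the empty one.

For the degeneracy, given a vertex set `S` pick `w ∈ V(H)` with at most `l` neighbours among
the second coordinates of `S`, and then a vertex `x` of `Q(G)` in the fibre of `S` over `w`
that is either an original vertex with at most `k` neighbours in the fibre (its copy of `H`
adds at most `l`), or an edge vertex with at most `2Δ - 2` (edge vertices have no `H`-edges).
If `Δ ≤ k` any original vertex of the fibre, or else any edge vertex, will do. If `k < Δ`,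
take `u ∈ V(G)` with at most `k` neighbours among the vertices of `G` seen by the fibre:
either `u` lies in the fibre, or some edge `uv` does, and it has at most
`1 + (k - 1) + (Δ - 1) ≤ 2Δ - 2` neighbours there. -/

open Finset

section AlonTarsi

variable {V : Type*}

lemma IsEulerianSub.eq_empty_of_rank_lt (r : V → ℕ) {B : Finset (V × V)} (hB : IsEulerianSub B)
    (hr : ∀ a ∈ B, r a.1 < r a.2) : B = ∅ := by
  by_contra hne
  obtain ⟨b, hb, hmax⟩ := exists_max_image B (fun a => r a.2) (nonempty_of_ne_empty hne)
  have hout : 0 < arcOutDeg B b.2 := by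
    rw [← hB b.2]
    exact card_pos.2 ⟨b, mem_filter.2 ⟨hb, rfl⟩⟩
  obtain ⟨c, hc⟩ := card_pos.1 hout
  rw [mem_filter] at hc
  have := hr c hc.1
  have := hmax c hc.1
  rw [hc.2] at *
  omega

lemma isATOrientation_of_rank_lt (r : V → ℕ) {A : Finset (V × V)}
    (hr : ∀ a ∈ A, r a.1 < r a.2) : IsATOrientation A := by
  have hE : ∀ B ∈ A.powerset, IsEulerianSub B ↔ B = ∅ := fun B hB =>
    ⟨fun hE => hE.eq_empty_of_rank_lt r fun a ha => hr a (mem_powerset.1 hB ha),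
      fun h => h ▸ fun v => by simp [arcInDeg, arcOutDeg]⟩
  have heven : A.powerset.filter (fun B => IsEulerianSub B ∧ Even #B) = {∅} := by
    ext B
    simp only [mem_filter, mem_singleton]
    constructor
    · rintro ⟨hB, hEB, -⟩
      exact (hE B hB).1 hEB
    · rintro rfl
      exact ⟨empty_mem_powerset A, (hE ∅ (empty_mem_powerset A)).2 rfl, by simp⟩
  have hodd : A.powerset.filter (fun B => IsEulerianSub B ∧ ¬Even #B) = ∅ :=
    filter_eq_empty_iff.2 fun B hB ⟨hEB, hodd⟩ => hodd (by simp [(hE B hB).1 hEB])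
  rw [IsATOrientation, heven, hodd]
  simp

lemma Degenerate.exists_rank_on {m : ℕ} {G : SimpleGraph V} (hG : Degenerate m G)
    (s : Finset V) : ∃ r : V → ℕ, Set.InjOn r s ∧
      ∀ u ∈ s, #(s.filter fun v => G.Adj u v ∧ r u < r v) ≤ m := by
  induction s using Finset.strongInduction with
  | H s ih =>
  rcases s.eq_empty_or_nonempty with rfl | hs
  · exact ⟨fun _ => 0, by simp, by simp⟩
  obtain ⟨v, hv, hdeg⟩ := hG s hs
  obtain ⟨r, hinj, hr⟩ := ih (s.erase v) (erase_ssubset hv)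
  -- `v` gets the least rank, so its out-neighbours are all its neighbours in `s`
  refine ⟨fun u => if u = v then 0 else r u + 1, ?_, fun u hu => ?_⟩
  · intro x hx y hy hxy
    dsimp only at hxy
    split_ifs at hxy with hxv hyv hyv
    · exact hxv.trans hyv.symm
    · exact hinj (mem_erase.2 ⟨hxv, hx⟩) (mem_erase.2 ⟨hyv, hy⟩) (by omega)
  by_cases huv : u = v
  · subst huv
    exact (card_le_card fun w => by simp +contextual).trans hdeg
  · refine le_trans (le_of_eq (congrArg card ?_)) (hr u (mem_erase.2 ⟨huv, hu⟩))
    ext w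
    by_cases hwv : w = v <;> simp [hwv, huv]

lemma Degenerate.exists_rank [Fintype V] {m : ℕ} {G : SimpleGraph V} (hG : Degenerate m G) :
    ∃ r : V → ℕ, Function.Injective r ∧ ∀ u, #{v | G.Adj u v ∧ r u < r v} ≤ m := by
  obtain ⟨r, hinj, hr⟩ := hG.exists_rank_on univ
  exact ⟨r, Set.injOn_univ.1 (by simpa using hinj), fun u => hr u (mem_univ u)⟩

theorem alonTarsiNumber_le_of_degenerate [Fintype V] {m : ℕ} {G : SimpleGraph V}
    (hG : Degenerate m G) : alonTarsiNumber G ≤ m + 1 := by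
  obtain ⟨r, hinj, hr⟩ := hG.exists_rank
  let A : Finset (V × V) := {a | G.Adj a.1 a.2 ∧ r a.1 < r a.2}
  refine Nat.sInf_le ⟨A, ⟨fun a ha => (mem_filter.1 ha).2.1, fun u v huv => ?_⟩,
    isATOrientation_of_rank_lt r fun a ha => (mem_filter.1 ha).2.2, fun u => ?_⟩
  · have := hinj.ne (G.ne_of_adj huv)
    simp only [A, mem_filter, mem_univ, true_and, huv, huv.symm]
    omega
  · refine Nat.lt_succ_of_le ((card_le_card_of_injOn Prod.snd ?_ ?_).trans (hr u))
    · intro a ha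
      simp only [A, coe_filter, mem_filter, mem_univ, true_and, Set.mem_ofPred_eq] at ha ⊢
      obtain ⟨h, rfl⟩ := ha
      exact h
    · intro a ha b hb hab
      simp_all [A, Prod.ext_iff]

end AlonTarsi

section FSum

variable {V E W : Type*}

lemma fSum_adj (K : SimpleGraph (V ⊕ E)) (H : SimpleGraph W) (a b : (V ⊕ E) × W) :
    (fSum K H).Adj a b ↔
      (a.1 = b.1 ∧ (∃ u : V, a.1 = Sum.inl u) ∧ H.Adj a.2 b.2) ∨ (a.2 = b.2 ∧ K.Adj a.1 b.1) := by
  simp only [fSum, SimpleGraph.fromRel_adj]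
  constructor
  · rintro ⟨-, (h | h) | ⟨h₁, h₂⟩ | ⟨h₁, h₂⟩⟩
    · exact Or.inl h
    · exact Or.inr h
    · exact Or.inl ⟨h₁.symm, h₁ ▸ h₂.1, h₂.2.symm⟩
    · exact Or.inr ⟨h₁.symm, h₂.symm⟩
  · rintro (h | h)
    · exact ⟨fun hab => H.irrefl (hab ▸ h.2.2), Or.inl (Or.inl h)⟩
    · exact ⟨fun hab => K.irrefl (hab ▸ h.2), Or.inl (Or.inr h)⟩

def SplitDegenerate (a b : ℕ) (K : SimpleGraph (V ⊕ E)) : Prop :=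
  ∀ X : Finset (V ⊕ E), X.Nonempty →
    ∃ x ∈ X, #(X.filter fun y => K.Adj x y) ≤ x.elim (fun _ => a) (fun _ => b)

theorem degenerate_fSum {a b l : ℕ} {K : SimpleGraph (V ⊕ E)} {H : SimpleGraph W}
    (hK : SplitDegenerate a b K) (hH : Degenerate l H) :
    Degenerate (max b (a + l)) (fSum K H) := by
  intro s hs
  obtain ⟨w, hwT, hw⟩ := hH (s.image Prod.snd) (hs.image _)
  set X := (s.filter (·.2 = w)).image Prod.fst with hX
  have hmemX {x} : x ∈ X ↔ (x, w) ∈ s := by simp [hX]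
  obtain ⟨x, hxX, hx⟩ := hK X (by obtain ⟨q, hq, rfl⟩ := mem_image.1 hwT; exact ⟨q.1, hmemX.2 hq⟩)
  refine ⟨(x, w), hmemX.1 hxX, ?_⟩
  have hfiber : #(s.filter fun q => q.2 = w ∧ K.Adj x q.1) ≤ #(X.filter fun y => K.Adj x y) :=
    card_le_card_of_injOn Prod.fst
      (fun q hq => by
        obtain ⟨hqs, hqw, hadj⟩ := mem_filter.1 hq
        exact mem_filter.2 ⟨hmemX.2 (by rw [← hqw]; exact hqs), hadj⟩)
      fun q hq q' hq' h => Prod.ext h (by simp_all)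
  have hcopy : #(s.filter fun q => q.1 = x ∧ H.Adj w q.2) ≤
      #((s.image Prod.snd).filter fun z => H.Adj w z) :=
    card_le_card_of_injOn Prod.snd
      (fun q hq => mem_filter.2 ⟨mem_image_of_mem _ (mem_filter.1 hq).1, (mem_filter.1 hq).2.2⟩)
      fun q hq q' hq' h => Prod.ext (by simp_all) h
  rcases x with u | e
  · have hsub : (s.filter fun q => (fSum K H).Adj (Sum.inl u, w) q) ⊆
        (s.filter fun q => q.2 = w ∧ K.Adj (Sum.inl u) q.1) ∪
          s.filter fun q => q.1 = Sum.inl u ∧ H.Adj w q.2 := by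
      intro q hq
      simp only [mem_filter, mem_union, fSum_adj] at hq ⊢
      rcases hq with ⟨hq, ⟨h₁, -, h₂⟩ | ⟨h₁, h₂⟩⟩
      exacts [Or.inr ⟨hq, h₁.symm, h₂⟩, Or.inl ⟨hq, h₁.symm, h₂⟩]
    have := (card_le_card hsub).trans (card_union_le _ _)
    simp only [Sum.elim_inl] at hx
    omega
  · have hsub : (s.filter fun q => (fSum K H).Adj (Sum.inr e, w) q) ⊆
        s.filter fun q => q.2 = w ∧ K.Adj (Sum.inr e) q.1 := by
      intro q hq
      simp only [mem_filter, fSum_adj] at hq ⊢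
      rcases hq with ⟨hq, ⟨-, ⟨u, hu⟩, -⟩ | ⟨h₁, h₂⟩⟩
      exacts [Sum.inr_ne_inl hu |>.elim, ⟨hq, h₁.symm, h₂⟩]
    have := card_le_card hsub
    simp only [Sum.elim_inr] at hx
    omega

end FSum

section QGraph

variable {V : Type*} {G : SimpleGraph V}

@[simp]
lemma qGraph_adj_inl_inl (u v : V) : ¬(qGraph G).Adj (.inl u) (.inl v) := by
  simp [qGraph]

@[simp]
lemma qGraph_adj_inl_inr (u : V) (e : G.edgeSet) :
    (qGraph G).Adj (.inl u) (.inr e) ↔ u ∈ (e : Sym2 V) := by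
  simp [qGraph]

@[simp]
lemma qGraph_adj_inr_inl (e : G.edgeSet) (u : V) :
    (qGraph G).Adj (.inr e) (.inl u) ↔ u ∈ (e : Sym2 V) := by
  simp [qGraph]

@[simp]
lemma qGraph_adj_inr_inr (e f : G.edgeSet) :
    (qGraph G).Adj (.inr e) (.inr f) ↔ e ≠ f ∧ ∃ z, z ∈ (e : Sym2 V) ∧ z ∈ (f : Sym2 V) := by
  simp only [qGraph, SimpleGraph.fromRel_adj, ne_eq, Sum.inr.injEq]
  grind

lemma card_filter_mem_le_card_filter_adj (F : Finset G.edgeSet) {T : Finset V}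
    (hT : ∀ e ∈ F, ∀ z ∈ (e : Sym2 V), z ∈ T) (u : V) :
    #(F.filter fun e : G.edgeSet => u ∈ (e : Sym2 V)) ≤ #(T.filter fun z => G.Adj u z) := by
  rw [← card_map (Function.Embedding.subtype _)]
  refine (card_le_card fun x hx => ?_).trans (card_image_le (f := fun z => s(u, z)))
  obtain ⟨e, he, rfl⟩ := mem_map.1 hx
  obtain ⟨heF, hu⟩ := mem_filter.1 he
  have hsym : s(u, Sym2.Mem.other hu) = e := Sym2.other_spec hu
  refine mem_image.2 ⟨Sym2.Mem.other hu, mem_filter.2 ⟨hT e heF _ (Sym2.other_mem hu), ?_⟩, hsym⟩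
  have := e.2
  rwa [← hsym, SimpleGraph.mem_edgeSet] at this

lemma filter_qGraph_adj_inl (X : Finset (V ⊕ G.edgeSet)) (u : V) :
    (X.filter fun y => (qGraph G).Adj (.inl u) y) =
      (X.toRight.filter fun e : G.edgeSet => u ∈ (e : Sym2 V)).map .inr := by
  ext (z | e) <;> simp

-- The `+ 2` is the edge `e` itself, counted in both terms on the right.
lemma card_filter_qGraph_adj_inr_le (X : Finset (V ⊕ G.edgeSet)) {e : G.edgeSet}
    (he : e ∈ X.toRight) {a b : V} (hab : (e : Sym2 V) = s(a, b)) :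
    #(X.filter fun y => (qGraph G).Adj (.inr e) y) + 2 ≤
      #(X.filter fun y => y = .inl a ∨ y = .inl b) +
        #(X.toRight.filter fun f : G.edgeSet => a ∈ (f : Sym2 V)) +
        #(X.toRight.filter fun f : G.edgeSet => b ∈ (f : Sym2 V)) := by
  set Fa := X.toRight.filter fun f : G.edgeSet => a ∈ (f : Sym2 V)
  set Fb := X.toRight.filter fun f : G.edgeSet => b ∈ (f : Sym2 V)
  have hsub : (X.filter fun y => (qGraph G).Adj (.inr e) y) ⊆
      (X.filter fun y => y = .inl a ∨ y = .inl b) ∪ (Fa.erase e ∪ Fb.erase e).map .inr := by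
    rintro (z | f) hy
    · simp_all
    · simp only [mem_filter, qGraph_adj_inr_inr, hab, Sym2.mem_iff] at hy
      obtain ⟨hf, hef, z, rfl | rfl, hz⟩ := hy <;> simp [Fa, Fb, hf, hz, Ne.symm hef]
  have hea : e ∈ Fa := by simp [Fa, he, hab]
  have heb : e ∈ Fb := by simp [Fb, he, hab]
  have := (card_le_card hsub).trans (card_union_le _ _)
  have := card_union_le (Fa.erase e) (Fb.erase e)
  rw [card_map] at *
  have := card_erase_add_one hea
  have := card_erase_add_one heb
  omega

variable [Fintype V]

lemma card_filter_mem_le_maxDegree (F : Finset G.edgeSet) (u : V) :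
    #(F.filter fun e : G.edgeSet => u ∈ (e : Sym2 V)) ≤ G.maxDegree := by
  refine (card_filter_mem_le_card_filter_adj F (T := univ) (by simp) u).trans ?_
  rw [← SimpleGraph.neighborFinset_eq_filter, SimpleGraph.card_neighborFinset_eq_degree]
  exact G.degree_le_maxDegree u

variable {k : ℕ}

lemma qGraph_splitDegenerate_of_maxDegree_le (h : G.maxDegree ≤ k) :
    SplitDegenerate k (2 * G.maxDegree - 2) (qGraph G) := by
  intro X hX
  by_cases hV : ∃ u : V, .inl u ∈ X
  · obtain ⟨u, hu⟩ := hV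
    refine ⟨.inl u, hu, ?_⟩
    rw [filter_qGraph_adj_inl, card_map]
    exact (card_filter_mem_le_maxDegree _ u).trans h
  · obtain ⟨u | e, he⟩ := hX
    · exact absurd ⟨u, he⟩ hV
    obtain ⟨a, b, hab⟩ : ∃ a b, (e : Sym2 V) = s(a, b) :=
      Sym2.inductionOn (e : Sym2 V) fun a b => ⟨a, b, rfl⟩
    refine ⟨.inr e, he, ?_⟩
    have hnone : X.filter (fun y => y = .inl a ∨ y = .inl b) = ∅ :=
      filter_eq_empty_iff.2 (by rintro _ hy (rfl | rfl) <;> exact hV ⟨_, hy⟩)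
    have := card_filter_qGraph_adj_inr_le X (mem_toRight.2 he) hab
    have := card_filter_mem_le_maxDegree X.toRight a
    have := card_filter_mem_le_maxDegree X.toRight b
    rw [hnone, card_empty] at *
    simp only [Sum.elim_inr]
    omega

lemma qGraph_splitDegenerate_of_lt_maxDegree (hG : Degenerate k G) (h : k < G.maxDegree) :
    SplitDegenerate k (2 * G.maxDegree - 2) (qGraph G) := by
  intro X hX
  set U : Finset V := {z | .inl z ∈ X ∨ ∃ e ∈ X.toRight, z ∈ (e : Sym2 V)} with hU
  have hUX : ∀ e ∈ X.toRight, ∀ z ∈ (e : Sym2 V), z ∈ U := fun e he z hz => by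
    simp only [hU, mem_filter, mem_univ, true_and]
    exact Or.inr ⟨e, he, hz⟩
  obtain ⟨u, huU, hu⟩ := hG U <| by
    obtain ⟨u | e, he⟩ := hX
    · exact ⟨u, by simp [hU, he]⟩
    · exact ⟨_, hUX e (mem_toRight.2 he) _ (Sym2.out_fst_mem _)⟩
  have hFu := (card_filter_mem_le_card_filter_adj X.toRight hUX u).trans hu
  by_cases huX : .inl u ∈ X
  · refine ⟨.inl u, huX, ?_⟩
    rw [filter_qGraph_adj_inl, card_map]
    exact hFu
  obtain ⟨e, he, hue⟩ : ∃ e ∈ X.toRight, u ∈ (e : Sym2 V) := by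
    simpa [hU, huX] using huU
  obtain ⟨v, huv⟩ : ∃ v, (e : Sym2 V) = s(u, v) := ⟨_, (Sym2.other_spec hue).symm⟩
  refine ⟨.inr e, mem_toRight.1 he, ?_⟩
  have hv : #(X.filter fun y => y = .inl u ∨ y = .inl v) ≤ 1 :=
    card_le_one.2 fun y hy y' hy' => by
      simp only [mem_filter] at hy hy'
      rcases hy with ⟨hy, rfl | rfl⟩ <;> rcases hy' with ⟨hy', rfl | rfl⟩ <;> tauto
  have := card_filter_qGraph_adj_inr_le X he huv
  have := card_filter_mem_le_maxDegree X.toRight v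
  have : 0 < #(X.toRight.filter fun f : G.edgeSet => u ∈ (f : Sym2 V)) :=
    card_pos.2 ⟨e, mem_filter.2 ⟨he, hue⟩⟩
  simp only [Sum.elim_inr]
  omega

theorem qGraph_splitDegenerate (hG : Degenerate k G) :
    SplitDegenerate k (2 * G.maxDegree - 2) (qGraph G) :=
  (le_or_gt G.maxDegree k).elim qGraph_splitDegenerate_of_maxDegree_le
    (qGraph_splitDegenerate_of_lt_maxDegree hG)

end QGraph

theorem stmt14_general {V W : Type*} [Fintype V] [Fintype W]
    (k l : ℕ) (G : SimpleGraph V) (H : SimpleGraph W)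
    (hG : Degenerate k G) (hH : Degenerate l H) :
    alonTarsiNumber (qSum G H) ≤ max (2 * G.maxDegree - 2) (k + l) + 1 :=
  alonTarsiNumber_le_of_degenerate (degenerate_fSum (qGraph_splitDegenerate hG) hH)

/-- if `G` is `k`-degenerate with `Δ(G) > 1` and `H` is `l`-degenerate,
then `AT(G +_Q H) ≤ max (2Δ(G) - 2) (k + l) + 1`. -/
theorem stmt14 {V W : Type*} [Fintype V] [Fintype W]
    (k l : ℕ) (G : SimpleGraph V) (H : SimpleGraph W)
    (hΔ : 1 < G.maxDegree) (hG : Degenerate k G) (hH : Degenerate l H) :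
    alonTarsiNumber (qSum G H) ≤ max (2 * G.maxDegree - 2) (k + l) + 1 :=
  stmt14_general k l G H hG hH
end

section
/- Let G be a k-degenerate graph with maximum degree Δ(G) and let H be an l-degenerate graph. Then the T-sum G +_T H is max{2Δ(G), k + l}-degenerate. -/
open scoped Classical

/-! A vertex `(e, w)` of `G +_T H` coming from an edge `e = ab` has all its neighbours in its
own copy of `T(G)`, where `e` has `deg a + deg b ≤ 2Δ(G)` neighbours. A vertex set containing
no such vertex lies in the copy of `G □ H` spanned by the original vertices, and the box product
of a `k`-degenerate and an `l`-degenerate graph is `(k + l)`-degenerate. -/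

open SimpleGraph Finset Function

section FSum

variable {V E W : Type*} (K : SimpleGraph (V ⊕ E)) (H : SimpleGraph W)

lemma fSum_adj_inr {e : E} {w : W} {q : (V ⊕ E) × W} :
    (fSum K H).Adj (Sum.inr e, w) q ↔ q.2 = w ∧ K.Adj (Sum.inr e) q.1 := by
  obtain ⟨x, w'⟩ := q
  simp only [fSum, fromRel_adj]
  constructor
  · rintro ⟨-, (⟨rfl, ⟨u, hu⟩, -⟩ | ⟨h, hK⟩) | (⟨rfl, ⟨u, hu⟩, -⟩ | ⟨h, hK⟩)⟩
    · cases hu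
    · exact ⟨h.symm, hK⟩
    · cases hu
    · exact ⟨h, hK.symm⟩
  · rintro ⟨rfl, hK⟩
    exact ⟨fun h => hK.ne (Prod.ext_iff.1 h).1, Or.inl (Or.inr ⟨rfl, hK⟩)⟩

lemma fSum_comap_prodMap_inl :
    (fSum K H).comap (Prod.map Sum.inl id) = K.comap Sum.inl □ H := by
  ext ⟨u, w⟩ ⟨v, w'⟩
  simp only [comap_adj, boxProd_adj, fSum, fromRel_adj, Prod.map, id]
  aesop (add safe apply SimpleGraph.Adj.symm)

lemma card_filter_fSum_adj_inr_le (s : Finset ((V ⊕ E) × W)) (e : E) (w : W) :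
    #(s.filter ((fSum K H).Adj (Sum.inr e, w))) ≤
      #((s.image Prod.fst).filter (K.Adj (Sum.inr e))) := by
  refine card_le_card_of_injOn Prod.fst (fun q hq => ?_) (fun q hq q' hq' h => ?_)
  · rw [coe_filter, Set.mem_ofPred_eq, fSum_adj_inr] at hq
    exact mem_filter.2 ⟨mem_image_of_mem _ hq.1, hq.2.2⟩
  · rw [coe_filter, Set.mem_ofPred_eq, fSum_adj_inr] at hq hq'
    exact Prod.ext h (hq.2.1.trans hq'.2.1.symm)

end FSum

section TotalGraph

variable {V : Type*} (G : SimpleGraph V)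

lemma tGraph_comap_inl : (tGraph G).comap Sum.inl = G := by
  ext u v
  simp only [comap_adj, tGraph, fromRel_adj, ne_eq, Sum.inl.injEq]
  exact ⟨fun ⟨_, h⟩ => h.elim id Adj.symm, fun h => ⟨h.ne, Or.inl h⟩⟩

lemma tGraph_adj_inr_inl {e : G.edgeSet} {u : V} :
    (tGraph G).Adj (Sum.inr e) (Sum.inl u) ↔ u ∈ (e : Sym2 V) := by
  simp [tGraph]

lemma tGraph_adj_inr_inr {e f : G.edgeSet} :
    (tGraph G).Adj (Sum.inr e) (Sum.inr f) ↔
      e ≠ f ∧ ∃ u : V, u ∈ (e : Sym2 V) ∧ u ∈ (f : Sym2 V) := by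
  simp only [tGraph, fromRel_adj, ne_eq, Sum.inr.injEq]
  exact ⟨fun ⟨_, h⟩ => h.elim id fun ⟨hfe, u, hf, he⟩ => ⟨Ne.symm hfe, u, he, hf⟩,
    fun h => ⟨h.1, Or.inl h⟩⟩

/-- The neighbours of the edge `e = ab` in `T(G)` are counted by the flags `(c, f)` with
`c ∈ {a, b}` and `c ∈ f`: the endpoint `c` is sent to `(c, e)`, a neighbouring edge `f` to
`(c, f)` for an endpoint `c` it shares with `e`. -/
lemma card_filter_tGraph_adj_inr_le [Fintype V] (t : Finset (V ⊕ G.edgeSet))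
    (e : G.edgeSet) : #(t.filter ((tGraph G).Adj (Sum.inr e))) ≤ 2 * G.maxDegree := by
  obtain ⟨a, b, hab⟩ := (Sym2.exists (f := (· = (e : Sym2 V)))).1 ⟨_, rfl⟩
  have mem_flags {c : V} {f : G.edgeSet} (hc : c ∈ (f : Sym2 V)) :
      (c, (f : Sym2 V)) ∈ ({c} ×ˢ G.incidenceFinset c : Finset (V × Sym2 V)) :=
    mem_product.2 ⟨mem_singleton_self c, (G.mem_incidenceFinset c _).2 ⟨f.2, hc⟩⟩
  let flag : V ⊕ G.edgeSet → V × Sym2 V :=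
    Sum.elim (fun u => (u, e)) fun f => (if a ∈ (f : Sym2 V) then a else b, f)
  calc #(t.filter ((tGraph G).Adj (Sum.inr e)))
      ≤ #({a} ×ˢ G.incidenceFinset a ∪ {b} ×ˢ G.incidenceFinset b) := by
        refine card_le_card_of_injOn flag ?_ ?_
        · rintro (u | f) hx <;>
            simp only [coe_filter, Set.mem_ofPred_eq, tGraph_adj_inr_inl,
              tGraph_adj_inr_inr] at hx
          · have hu := hx.2
            rw [← hab, Sym2.mem_iff] at hu
            rcases hu with rfl | rfl
            · exact mem_union_left _ (mem_flags hx.2)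
            · exact mem_union_right _ (mem_flags hx.2)
          · obtain ⟨-, -, u, hue, huf⟩ := hx
            rw [← hab, Sym2.mem_iff] at hue
            by_cases haf : a ∈ (f : Sym2 V)
            · simp only [flag, Sum.elim_inr, if_pos haf, mem_coe]
              exact mem_union_left _ (mem_flags haf)
            · obtain rfl : u = b := hue.resolve_left (by rintro rfl; exact haf huf)
              simp only [flag, Sum.elim_inr, if_neg haf, mem_coe]
              exact mem_union_right _ (mem_flags huf)
        · rintro (u | f) hx (u' | f') hx' h <;>
            simp only [coe_filter, Set.mem_ofPred_eq, tGraph_adj_inr_inl,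
              tGraph_adj_inr_inr] at hx hx' <;>
            simp only [flag, Sum.elim_inl, Sum.elim_inr, Prod.mk.injEq] at h
          · rw [h.1]
          · exact absurd (Subtype.ext h.2) hx'.2.1
          · exact absurd (Subtype.ext h.2.symm) hx.2.1
          · rw [Subtype.ext h.2]
    _ ≤ G.degree a + G.degree b := by
        refine (card_union_le _ _).trans_eq ?_
        simp only [card_product, card_singleton, one_mul, card_incidenceFinset_eq_degree]
    _ ≤ 2 * G.maxDegree := by
        linarith [G.degree_le_maxDegree a, G.degree_le_maxDegree b]

end TotalGraph

namespace Degenerate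

variable {α β : Type*} {k l : ℕ}

/-- Pick a vertex `u` of low `G`-degree among the first coordinates of `s`, then a vertex
`w` of low `H`-degree in the fibre of `s` over `u`. -/
lemma boxProd {G : SimpleGraph α} {H : SimpleGraph β} (hG : Degenerate k G)
    (hH : Degenerate l H) : Degenerate (k + l) (G □ H) := by
  intro s hs
  obtain ⟨u, hu, hGu⟩ := hG (s.image Prod.fst) (hs.image _)
  have hfibre : ((s.filter (·.1 = u)).image Prod.snd).Nonempty := by
    obtain ⟨q, hq, rfl⟩ := mem_image.1 hu
    exact ⟨q.2, mem_image_of_mem _ (mem_filter.2 ⟨hq, rfl⟩)⟩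
  obtain ⟨w, hw, hHw⟩ := hH _ hfibre
  have huw : (u, w) ∈ s := by
    obtain ⟨q, hq, rfl⟩ := mem_image.1 hw
    exact (mem_filter.1 hq).2 ▸ (mem_filter.1 hq).1
  refine ⟨(u, w), huw, ?_⟩
  calc #(s.filter fun q => (G □ H).Adj (u, w) q)
      ≤ #(s.filter fun q => G.Adj u q.1 ∧ w = q.2) +
          #(s.filter fun q => H.Adj w q.2 ∧ u = q.1) := by
        simp only [boxProd_adj, filter_or]
        exact card_union_le _ _
    _ ≤ #((s.image Prod.fst).filter (G.Adj u)) +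
          #(((s.filter (·.1 = u)).image Prod.snd).filter (H.Adj w)) := by
        gcongr
        · refine card_le_card_of_injOn Prod.fst (fun q hq => ?_) (fun q hq q' hq' h => ?_)
          · rw [coe_filter, Set.mem_ofPred_eq] at hq
            exact mem_filter.2 ⟨mem_image_of_mem _ hq.1, hq.2.1⟩
          · rw [coe_filter, Set.mem_ofPred_eq] at hq hq'
            exact Prod.ext h (hq.2.2.symm.trans hq'.2.2)
        · refine card_le_card_of_injOn Prod.snd (fun q hq => ?_) (fun q hq q' hq' h => ?_)
          · rw [coe_filter, Set.mem_ofPred_eq] at hq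
            exact mem_filter.2 ⟨mem_image_of_mem _ (mem_filter.2 ⟨hq.1, hq.2.2.symm⟩), hq.2.1⟩
          · rw [coe_filter, Set.mem_ofPred_eq] at hq hq'
            exact Prod.ext (hq.2.2.symm.trans hq'.2.2) h
    _ ≤ k + l := add_le_add hGu hHw

lemma exists_of_subset_range {G : SimpleGraph β} {f : α → β} (hf : Injective f)
    (h : Degenerate k (G.comap f)) {s : Finset β} (hs : s.Nonempty)
    (hsf : (s : Set β) ⊆ Set.range f) : ∃ v ∈ s, #(s.filter (G.Adj v)) ≤ k := by
  have hpre : (s.preimage f hf.injOn).Nonempty := by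
    obtain ⟨x, hx⟩ := hs
    obtain ⟨a, rfl⟩ := hsf hx
    exact ⟨a, mem_preimage.2 hx⟩
  obtain ⟨a, ha, hdeg⟩ := h _ hpre
  refine ⟨f a, mem_preimage.1 ha, le_trans ?_ ((card_image_le (f := f)).trans hdeg)⟩
  refine card_le_card fun x hx => ?_
  obtain ⟨hxs, hadj⟩ := mem_filter.1 hx
  obtain ⟨b, rfl⟩ := hsf hxs
  exact mem_image_of_mem f (mem_filter.2 ⟨mem_preimage.2 hxs, hadj⟩)

end Degenerate

theorem stmt16_general {V W : Type*} [Fintype V]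
    (k l : ℕ) (G : SimpleGraph V) (H : SimpleGraph W)
    (hG : Degenerate k G) (hH : Degenerate l H) :
    Degenerate (max (2 * G.maxDegree) (k + l)) (tSum G H) := by
  intro s hs
  by_cases hedge : ∃ e w, (Sum.inr e, w) ∈ s
  · obtain ⟨e, w, hew⟩ := hedge
    exact ⟨_, hew, (card_filter_fSum_adj_inr_le _ H s e w).trans <|
      (card_filter_tGraph_adj_inr_le G _ e).trans (le_max_left _ _)⟩
  · have hsub : (s : Set ((V ⊕ G.edgeSet) × W)) ⊆ Set.range (Prod.map Sum.inl id) := by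
      rintro ⟨_ | e, w⟩ h
      · exact ⟨(_, w), rfl⟩
      · exact absurd ⟨e, w, h⟩ hedge
    have hcomap : (tSum G H).comap (Prod.map Sum.inl id) = G □ H := by
      rw [tSum, fSum_comap_prodMap_inl, tGraph_comap_inl]
    obtain ⟨v, hv, hdeg⟩ := (hcomap ▸ hG.boxProd hH).exists_of_subset_range
      (Sum.inl_injective.prodMap injective_id) hs hsub
    exact ⟨v, hv, hdeg.trans (le_max_right _ _)⟩

/-- if `G` is `k`-degenerate with maximum degree `Δ(G)` and `H` is
`l`-degenerate, then `G +_T H` is `max (2Δ(G)) (k + l)`-degenerate. -/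
theorem stmt16 {V W : Type*} [Fintype V] [Fintype W]
    (k l : ℕ) (G : SimpleGraph V) (H : SimpleGraph W)
    (hG : Degenerate k G) (hH : Degenerate l H) :
    Degenerate (max (2 * G.maxDegree) (k + l)) (tSum G H) :=
  stmt16_general k l G H hG hH
end
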